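/- Let ρ > 0, T > 0, m₀ ≥ 0 and consider the closed curve of total length 4πρ formed by four half circles of radius ρ (two in planes {x₃=±ρ} centered on the x₃-axis, two in planes {x₂=±ρ} centered on the x₂-axis), traversed with constant speed 4πρ/T. If a loop v_I travels this curve with constant speed, satisfies |v_I(t)| = √2 ρ for all t, and the mutual distances satisfy |(R−I)v_I(t)| ≥ 2ρ for all R in the Klein group minus identity, then its Lagrangian action satisfies A(v_I) ≤ 32π²ρ²/T + (3+2√2 m₀)T/ρ; moreover the choice ρ = ((3+2√2 m₀)T²/(64π²))^{1/3} yields A(v_I) ≤ 6π^{2/3}(3+2√2 m₀)^{2/3}T^{1/3}. -/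

import Mathlib

/-!
Pointwise along the loop the kinetic term is the constant `(4πρ/T)²/2`, the attraction of the
central body is `m₀/(√2ρ)`, and each of the three mutual terms is at most `1/(2ρ)`. Integrating
this constant bound over `[0, T]` gives the first estimate; the second is its value at the
minimising radius, where `ρ³ = cT²/(64π²)`.
-/

open Real intervalIntegral

/-- Euclidean norm on `ℝ³` (as `Fin 3 → ℝ`). -/
noncomputable def norm3 (x : Fin 3 → ℝ) : ℝ := Real.sqrt (x 0 ^ 2 + x 1 ^ 2 + x 2 ^ 2)

/-- Rotation by π around the x₁-axis. -/
def KR₂ : Matrix (Fin 3) (Fin 3) ℝ := !![1, 0, 0; 0, -1, 0; 0, 0, -1]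

/-- Rotation by π around the x₂-axis. -/
def KR₃ : Matrix (Fin 3) (Fin 3) ℝ := !![-1, 0, 0; 0, 1, 0; 0, 0, -1]

/-- Rotation by π around the x₃-axis. -/
def KR₄ : Matrix (Fin 3) (Fin 3) ℝ := !![-1, 0, 0; 0, -1, 0; 0, 0, 1]

/-- The nontrivial elements `G \ {I}` of the Klein group. -/
noncomputable abbrev kleinRotations : Finset (Matrix (Fin 3) (Fin 3) ℝ) := {KR₂, KR₃, KR₄}

/-- The integrand of the action `A(v_I)`, with `x = v_I(t)` and `y = v̇_I(t)`. -/
noncomputable def kleinLagrangian (m₀ : ℝ) (x y : Fin 3 → ℝ) : ℝ :=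
  norm3 y ^ 2 / 2 + m₀ / norm3 x + (1 / 2) * ∑ R ∈ kleinRotations, 1 / norm3 (R.mulVec x - x)

lemma norm3_nonneg (x : Fin 3 → ℝ) : 0 ≤ norm3 x := Real.sqrt_nonneg _

lemma kleinLagrangian_nonneg {m₀ : ℝ} (hm : 0 ≤ m₀) (x y : Fin 3 → ℝ) :
    0 ≤ kleinLagrangian m₀ x y := by
  have hsum : 0 ≤ ∑ R ∈ kleinRotations, 1 / norm3 (R.mulVec x - x) :=
    Finset.sum_nonneg fun R _ => one_div_nonneg.mpr (norm3_nonneg _)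
  have := norm3_nonneg x
  unfold kleinLagrangian
  positivity

lemma sum_inv_norm3_kleinRotations_le {ρ : ℝ} (hρ : 0 < ρ) {x : Fin 3 → ℝ}
    (hdist : ∀ R ∈ kleinRotations, 2 * ρ ≤ norm3 (R.mulVec x - x)) :
    ∑ R ∈ kleinRotations, 1 / norm3 (R.mulVec x - x) ≤ 3 / (2 * ρ) := by
  have hterm : ∀ R ∈ kleinRotations, 1 / norm3 (R.mulVec x - x) ≤ 1 / (2 * ρ) :=
    fun R hR => one_div_le_one_div_of_le (by positivity) (hdist R hR)
  calc ∑ R ∈ kleinRotations, 1 / norm3 (R.mulVec x - x)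
      ≤ kleinRotations.card • (1 / (2 * ρ)) := Finset.sum_le_card_nsmul _ _ _ hterm
    _ ≤ 3 • (1 / (2 * ρ)) := by gcongr; exact Finset.card_le_three
    _ = 3 / (2 * ρ) := by ring

lemma kleinLagrangian_le {ρ m₀ : ℝ} (hρ : 0 < ρ) {x y : Fin 3 → ℝ}
    (hx : norm3 x = √2 * ρ)
    (hdist : ∀ R ∈ kleinRotations, 2 * ρ ≤ norm3 (R.mulVec x - x)) :
    kleinLagrangian m₀ x y ≤ norm3 y ^ 2 / 2 + (3 + 2 * √2 * m₀) / (4 * ρ) := by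
  have hsum := sum_inv_norm3_kleinRotations_le hρ hdist
  have hcentral : m₀ / norm3 x = 2 * √2 * m₀ / (4 * ρ) := by
    rw [hx, div_eq_div_iff (by positivity) (by positivity)]
    linear_combination (-2 * m₀ * ρ) * Real.mul_self_sqrt (zero_le_two : (0 : ℝ) ≤ 2)
  have hhalf : 3 / (4 * ρ) = (1 / 2) * (3 / (2 * ρ)) := by field_simp; norm_num
  unfold kleinLagrangian
  rw [hcentral, add_div, hhalf]
  linarith

lemma integral_le_mul_of_abs_le {f : ℝ → ℝ} {a b C : ℝ} (hab : a ≤ b)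
    (hf : ∀ x ∈ Set.Ioc a b, |f x| ≤ C) : ∫ x in a..b, f x ≤ (b - a) * C := by
  have hnorm := norm_integral_le_of_norm_le_const (f := f) (by rwa [Set.uIoc_of_le hab])
  rw [abs_of_nonneg (sub_nonneg.mpr hab), mul_comm] at hnorm
  exact (le_abs_self _).trans hnorm

lemma klein_action_le {ρ T m₀ : ℝ} (hρ : 0 < ρ) (hT : 0 < T) (hm : 0 ≤ m₀)
    {v v' : ℝ → Fin 3 → ℝ}
    (hspeed : ∀ t, norm3 (v' t) = 4 * π * ρ / T)
    (hnorm : ∀ t, norm3 (v t) = √2 * ρ)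
    (hdist : ∀ t, ∀ R ∈ kleinRotations, 2 * ρ ≤ norm3 (R.mulVec (v t) - v t)) :
    4 * ∫ t in (0 : ℝ)..T, kleinLagrangian m₀ (v t) (v' t)
      ≤ 32 * π ^ 2 * ρ ^ 2 / T + (3 + 2 * √2 * m₀) * T / ρ := by
  have hpointwise : ∀ t ∈ Set.Ioc 0 T, |kleinLagrangian m₀ (v t) (v' t)|
      ≤ (4 * π * ρ / T) ^ 2 / 2 + (3 + 2 * √2 * m₀) / (4 * ρ) := fun t _ => by
    rw [abs_of_nonneg (kleinLagrangian_nonneg hm _ _), ← hspeed t]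
    exact kleinLagrangian_le hρ (hnorm t) (hdist t)
  calc 4 * ∫ t in (0 : ℝ)..T, kleinLagrangian m₀ (v t) (v' t)
      ≤ 4 * ((T - 0) * ((4 * π * ρ / T) ^ 2 / 2 + (3 + 2 * √2 * m₀) / (4 * ρ))) := by
        gcongr; exact integral_le_mul_of_abs_le hT.le hpointwise
    _ = 32 * π ^ 2 * ρ ^ 2 / T + (3 + 2 * √2 * m₀) * T / ρ := by
        field_simp; ring

lemma rpow_div_three_pow_three {x : ℝ} (hx : 0 ≤ x) (y : ℝ) : (x ^ (y / 3)) ^ 3 = x ^ y := by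
  rw [← Real.rpow_mul_natCast hx]; norm_num

/-- At the critical radius `ρ³ = cT²/(64π²)` of `ρ ↦ 32π²ρ²/T + cT/ρ`, both terms combine
to `96π²ρ²/T`, whose cube is `216π²c²T`. -/
lemma action_bound_eq_of_pow_three_eq {ρ T c : ℝ} (hρ : 0 < ρ) (hT : 0 < T) (hc : 0 ≤ c)
    (hρ3 : ρ ^ 3 = c * T ^ 2 / (64 * π ^ 2)) :
    32 * π ^ 2 * ρ ^ 2 / T + c * T / ρ
      = 6 * π ^ ((2 : ℝ) / 3) * c ^ ((2 : ℝ) / 3) * T ^ ((1 : ℝ) / 3) := by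
  have hc_eq : c = 64 * π ^ 2 * ρ ^ 3 / T ^ 2 := by
    rw [hρ3]; field_simp
  have hlhs : 32 * π ^ 2 * ρ ^ 2 / T + c * T / ρ = 96 * π ^ 2 * ρ ^ 2 / T := by
    rw [hc_eq]; field_simp; ring
  have hcube : (96 * π ^ 2 * ρ ^ 2 / T) ^ 3
      = (6 * π ^ ((2 : ℝ) / 3) * c ^ ((2 : ℝ) / 3) * T ^ ((1 : ℝ) / 3)) ^ 3 := by
    rw [mul_pow, mul_pow, mul_pow, rpow_div_three_pow_three pi_pos.le,
      rpow_div_three_pow_three hc, rpow_div_three_pow_three hT.le, Real.rpow_two,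
      Real.rpow_two, Real.rpow_one,
      show (96 * π ^ 2 * ρ ^ 2 / T) ^ 3 = 96 ^ 3 * π ^ 6 * (ρ ^ 3) ^ 2 / T ^ 3 by ring, hρ3]
    field_simp
    ring
  rw [hlhs]
  exact (pow_left_inj₀ (by positivity) (by positivity) three_ne_zero).mp hcube

theorem klein_test_loop_action_bound_general (ρ T m₀ : ℝ) (hρ : 0 < ρ) (hT : 0 < T) (hm : 0 ≤ m₀)
    (v v' : ℝ → Fin 3 → ℝ)
    (hspeed : ∀ t, norm3 (v' t) = 4 * π * ρ / T)
    (hnorm : ∀ t, norm3 (v t) = Real.sqrt 2 * ρ)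
    (hdist : ∀ t, ∀ R ∈ ({KR₂, KR₃, KR₄} : Finset (Matrix (Fin 3) (Fin 3) ℝ)),
      2 * ρ ≤ norm3 (R.mulVec (v t) - v t)) :
    (4 * ∫ t in (0 : ℝ)..T,
        (norm3 (v' t) ^ 2 / 2 + m₀ / norm3 (v t) +
          (1 / 2) * ∑ R ∈ ({KR₂, KR₃, KR₄} : Finset (Matrix (Fin 3) (Fin 3) ℝ)),
            1 / norm3 (R.mulVec (v t) - v t)))
      ≤ 32 * π ^ 2 * ρ ^ 2 / T + (3 + 2 * Real.sqrt 2 * m₀) * T / ρ ∧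
    (ρ = ((3 + 2 * Real.sqrt 2 * m₀) * T ^ 2 / (64 * π ^ 2)) ^ ((1 : ℝ) / 3) →
      (4 * ∫ t in (0 : ℝ)..T,
          (norm3 (v' t) ^ 2 / 2 + m₀ / norm3 (v t) +
            (1 / 2) * ∑ R ∈ ({KR₂, KR₃, KR₄} : Finset (Matrix (Fin 3) (Fin 3) ℝ)),
              1 / norm3 (R.mulVec (v t) - v t)))
        ≤ 6 * π ^ ((2 : ℝ) / 3) * (3 + 2 * Real.sqrt 2 * m₀) ^ ((2 : ℝ) / 3) *
            T ^ ((1 : ℝ) / 3)) := by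
  have haction := klein_action_le hρ hT hm hspeed hnorm hdist
  refine ⟨haction, fun hρ_opt => haction.trans_eq (action_bound_eq_of_pow_three_eq hρ hT
    (by positivity) ?_)⟩
  rw [hρ_opt, one_div, ← Nat.cast_ofNat, Real.rpow_inv_natCast_pow (by positivity) three_ne_zero]

/-- Action estimate for the test loop of the Klein-group symmetric (1+4)-body problem:
a loop travelling with constant speed `4πρ/T` on the union of the four half circles, with
`|v_I(t)| = √2 ρ` and `|(R−I)v_I(t)| ≥ 2ρ` for every nontrivial `R` in the Klein group,
has action at most `32π²ρ²/T + (3+2√2 m₀)T/ρ`; moreover, for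
`ρ = ((3+2√2 m₀)T²/(64π²))^{1/3}` the action is at most
`6π^{2/3}(3+2√2 m₀)^{2/3}T^{1/3}`. -/
theorem klein_test_loop_action_bound (ρ T m₀ : ℝ) (hρ : 0 < ρ) (hT : 0 < T) (hm : 0 ≤ m₀)
    (v v' : ℝ → Fin 3 → ℝ)
    (hderiv : ∀ t, HasDerivAt v (v' t) t)
    (hspeed : ∀ t, norm3 (v' t) = 4 * π * ρ / T)
    (hnorm : ∀ t, norm3 (v t) = Real.sqrt 2 * ρ)
    (hdist : ∀ t, ∀ R ∈ ({KR₂, KR₃, KR₄} : Finset (Matrix (Fin 3) (Fin 3) ℝ)),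
      2 * ρ ≤ norm3 (R.mulVec (v t) - v t)) :
    (4 * ∫ t in (0 : ℝ)..T,
        (norm3 (v' t) ^ 2 / 2 + m₀ / norm3 (v t) +
          (1 / 2) * ∑ R ∈ ({KR₂, KR₃, KR₄} : Finset (Matrix (Fin 3) (Fin 3) ℝ)),
            1 / norm3 (R.mulVec (v t) - v t)))
      ≤ 32 * π ^ 2 * ρ ^ 2 / T + (3 + 2 * Real.sqrt 2 * m₀) * T / ρ ∧
    (ρ = ((3 + 2 * Real.sqrt 2 * m₀) * T ^ 2 / (64 * π ^ 2)) ^ ((1 : ℝ) / 3) →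
      (4 * ∫ t in (0 : ℝ)..T,
          (norm3 (v' t) ^ 2 / 2 + m₀ / norm3 (v t) +
            (1 / 2) * ∑ R ∈ ({KR₂, KR₃, KR₄} : Finset (Matrix (Fin 3) (Fin 3) ℝ)),
              1 / norm3 (R.mulVec (v t) - v t)))
        ≤ 6 * π ^ ((2 : ℝ) / 3) * (3 + 2 * Real.sqrt 2 * m₀) ^ ((2 : ℝ) / 3) *
            T ^ ((1 : ℝ) / 3)) :=
  klein_test_loop_action_bound_general ρ T m₀ hρ hT hm v v' hspeed hnorm hdist
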